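/- arXiv:1704.04938 — 2 statements merged into one kernel-verified Lean document; each statement's English description precedes it below -/
import Mathlib

section
/- Suppose f : ℝ → ℝ is globally Lipschitz with Lipschitz constant k. Then the map F(u) = -u + J *_ρ (f∘u) + h is globally Lipschitz on C_ρ(ℝ^N): for all continuous u, v : ℝ^N → ℝ with ‖u‖_ρ < ∞ and ‖v‖_ρ < ∞, ‖F(u) - F(v)‖_ρ ≤ (1 + k ‖J‖_{L¹(ℝ^N)} ‖ρ‖_∞) ‖u - v‖_ρ. -/
/-!
The terms `h` cancel, so `F(u) - F(v) = (v - u) + J *_ρ (f ∘ u - f ∘ v)`. The first term has weighted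
norm at most `‖u - v‖_ρ`. In the second, `|f(u y) - f(v y)| ρ(y) ≤ k ‖u - v‖_ρ`, so by translation
invariance its absolute value is at most `k ‖u - v‖_ρ ∫ J`, and `ρ(x) ≤ ‖ρ‖_∞` gives the claim.
Splitting the convolution of the difference needs both convolutions to be integrable, which holds
because `|f ∘ u| ρ ≤ |f 0| ‖ρ‖_∞ + k ‖u‖_ρ` is bounded.
-/

open MeasureTheory Real

/-- The weighted convolution `(J *_ρ v)(x) = ∫ J(x-y) v(y) ρ(y) dy` on `ℝ^N`. -/
noncomputable def convW {N : ℕ} (J ρ v : (Fin N → ℝ) → ℝ) (x : Fin N → ℝ) : ℝ :=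
  ∫ y, J (x - y) * v y * ρ y

open Set

section Lipschitz

variable {f : ℝ → ℝ} {k : ℝ}

lemma nonneg_of_abs_sub_le_mul (hf : ∀ a b : ℝ, |f a - f b| ≤ k * |a - b|) : 0 ≤ k := by
  simpa using (abs_nonneg _).trans (hf 1 0)

lemma lipschitzWith_of_abs_sub_le_mul (hf : ∀ a b : ℝ, |f a - f b| ≤ k * |a - b|) :
    LipschitzWith k.toNNReal f :=
  LipschitzWith.of_dist_le_mul fun a b => by
    simpa [Real.dist_eq, Real.coe_toNNReal _ (nonneg_of_abs_sub_le_mul hf)] using hf a b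

lemma abs_le_abs_zero_add_mul (hf : ∀ a b : ℝ, |f a - f b| ≤ k * |a - b|) (a : ℝ) :
    |f a| ≤ |f 0| + k * |a| := by
  have := hf a 0
  rw [sub_zero] at this
  linarith [abs_sub_abs_le_abs_sub (f a) (f 0)]

end Lipschitz

section WeightedBounds

variable {α : Type*} {ρ u v : α → ℝ}

lemma bddAbove_abs_sub_mul (hρ : ∀ x, 0 ≤ ρ x) (hu : BddAbove (range fun x => |u x| * ρ x))
    (hv : BddAbove (range fun x => |v x| * ρ x)) :
    BddAbove (range fun x => |u x - v x| * ρ x) := by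
  obtain ⟨Cu, hCu⟩ := hu
  obtain ⟨Cv, hCv⟩ := hv
  refine ⟨Cu + Cv, forall_mem_range.2 fun x => ?_⟩
  calc |u x - v x| * ρ x ≤ |u x| * ρ x + |v x| * ρ x := by
        rw [← add_mul]; exact mul_le_mul_of_nonneg_right (abs_sub _ _) (hρ x)
    _ ≤ Cu + Cv := add_le_add (hCu (mem_range_self x)) (hCv (mem_range_self x))

lemma bddAbove_abs_comp_mul {f : ℝ → ℝ} {k : ℝ} (hf : ∀ a b : ℝ, |f a - f b| ≤ k * |a - b|)
    (hρ : ∀ x, 0 ≤ ρ x) (hρbdd : BddAbove (range ρ))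
    (hu : BddAbove (range fun x => |u x| * ρ x)) :
    BddAbove (range fun x => |f (u x)| * ρ x) := by
  obtain ⟨R, hR⟩ := hρbdd
  obtain ⟨C, hC⟩ := hu
  have hk := nonneg_of_abs_sub_le_mul hf
  refine ⟨|f 0| * R + k * C, forall_mem_range.2 fun x => ?_⟩
  calc |f (u x)| * ρ x ≤ (|f 0| + k * |u x|) * ρ x :=
        mul_le_mul_of_nonneg_right (abs_le_abs_zero_add_mul hf _) (hρ x)
    _ = |f 0| * ρ x + k * (|u x| * ρ x) := by ring
    _ ≤ |f 0| * R + k * C := by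
        gcongr
        · exact hR (mem_range_self x)
        · exact hC (mem_range_self x)

end WeightedBounds

section WeightedConvolution

variable {G : Type*} [MeasurableSpace G] [AddGroup G] [MeasurableAdd G] [MeasurableNeg G]
  {μ : Measure G} [μ.IsNegInvariant] [μ.IsAddLeftInvariant] {J ρ g : G → ℝ}

lemma integrable_weighted_conv_integrand (hJ : Integrable J μ) (hg : AEStronglyMeasurable g μ)
    (hρm : AEStronglyMeasurable ρ μ) (hρ : ∀ y, 0 ≤ ρ y)
    (hgρ : BddAbove (range fun y => |g y| * ρ y)) (x : G) :
    Integrable (fun y => J (x - y) * g y * ρ y) μ := by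
  obtain ⟨C, hC⟩ := hgρ
  simp_rw [mul_assoc]
  refine (hJ.comp_sub_left x).mul_bdd (c := C) (hg.mul hρm) (.of_forall fun y => ?_)
  rw [Real.norm_eq_abs, abs_mul, abs_of_nonneg (hρ y)]
  exact hC (mem_range_self y)

lemma abs_integral_weighted_conv_le (hJ : Integrable J μ) (hJ0 : ∀ y, 0 ≤ J y)
    (hρ : ∀ y, 0 ≤ ρ y) {C : ℝ} (hC : ∀ y, |g y| * ρ y ≤ C) (x : G) :
    |∫ y, J (x - y) * g y * ρ y ∂μ| ≤ C * ∫ y, J y ∂μ := by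
  have hbound : ∀ y, ‖J (x - y) * g y * ρ y‖ ≤ J (x - y) * C := fun y => by
    rw [Real.norm_eq_abs, mul_assoc, abs_mul, abs_mul, abs_of_nonneg (hJ0 _),
      abs_of_nonneg (hρ y)]
    exact mul_le_mul_of_nonneg_left (hC y) (hJ0 _)
  calc |∫ y, J (x - y) * g y * ρ y ∂μ| ≤ ∫ y, J (x - y) * C ∂μ :=
        norm_integral_le_of_norm_le ((hJ.comp_sub_left x).mul_const C) (.of_forall hbound)
    _ = C * ∫ y, J y ∂μ := by
        rw [integral_mul_const, integral_sub_left_eq_self J μ x, mul_comm]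

end WeightedConvolution

lemma convW_sub {N : ℕ} {J ρ g₁ g₂ : (Fin N → ℝ) → ℝ} {x : Fin N → ℝ}
    (h₁ : Integrable fun y => J (x - y) * g₁ y * ρ y)
    (h₂ : Integrable fun y => J (x - y) * g₂ y * ρ y) :
    convW J ρ g₁ x - convW J ρ g₂ x = convW J ρ (fun y => g₁ y - g₂ y) x := by
  rw [convW, convW, convW, ← integral_sub h₁ h₂]
  congr 1
  ext y
  ring

lemma abs_convW_comp_sub_comp_le {N : ℕ} {J ρ u v : (Fin N → ℝ) → ℝ} {f : ℝ → ℝ} {k M : ℝ}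
    (hJint : Integrable J) (hJpos : ∀ x, 0 ≤ J x) (hρcont : Continuous ρ) (hρpos : ∀ x, 0 ≤ ρ x)
    (hρbdd : BddAbove (range ρ)) (hf : ∀ a b : ℝ, |f a - f b| ≤ k * |a - b|)
    (hucont : Continuous u) (hvcont : Continuous v)
    (hubdd : BddAbove (range fun x => |u x| * ρ x))
    (hvbdd : BddAbove (range fun x => |v x| * ρ x)) (hM : ∀ z, |u z - v z| * ρ z ≤ M)
    (x : Fin N → ℝ) :
    |convW J ρ (fun y => f (u y)) x - convW J ρ (fun y => f (v y)) x| ≤ k * M * ∫ y, J y := by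
  have hfw : ∀ {w}, Continuous w → BddAbove (range fun z => |w z| * ρ z) →
      Integrable fun y => J (x - y) * f (w y) * ρ y := fun hw hwρ =>
    integrable_weighted_conv_integrand hJint
      ((lipschitzWith_of_abs_sub_le_mul hf).continuous.comp hw).aestronglyMeasurable
      hρcont.aestronglyMeasurable hρpos (bddAbove_abs_comp_mul hf hρpos hρbdd hwρ) x
  rw [convW_sub (hfw hucont hubdd) (hfw hvcont hvbdd)]
  refine abs_integral_weighted_conv_le hJint hJpos hρpos (fun y => ?_) x
  calc |f (u y) - f (v y)| * ρ y ≤ k * |u y - v y| * ρ y :=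
        mul_le_mul_of_nonneg_right (hf _ _) (hρpos y)
    _ ≤ k * M := by
        rw [mul_assoc]
        exact mul_le_mul_of_nonneg_left (hM y) (nonneg_of_abs_sub_le_mul hf)

theorem F_globally_lipschitz_Crho_general {N : ℕ}
    (J ρ h : (Fin N → ℝ) → ℝ)
    (hJint : Integrable J) (hJpos : ∀ x, 0 ≤ J x)
    (hρcont : Continuous ρ) (hρpos : ∀ x, 0 ≤ ρ x)
    (hρbdd : BddAbove (Set.range ρ))
    (f : ℝ → ℝ) (k : ℝ) (hf : ∀ a b : ℝ, |f a - f b| ≤ k * |a - b|)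
    (u v : (Fin N → ℝ) → ℝ) (hucont : Continuous u) (hvcont : Continuous v)
    (hubdd : BddAbove (Set.range fun x => |u x| * ρ x))
    (hvbdd : BddAbove (Set.range fun x => |v x| * ρ x)) :
    ∀ x, |(-u x + convW J ρ (fun y => f (u y)) x + h x) -
          (-v x + convW J ρ (fun y => f (v y)) x + h x)| * ρ x ≤
        (1 + k * (∫ y, J y) * (⨆ z, ρ z)) * (⨆ z, |u z - v z| * ρ z) := by
  intro x
  set M := ⨆ z, |u z - v z| * ρ z
  set D := convW J ρ (fun y => f (u y)) x - convW J ρ (fun y => f (v y)) x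
  have hM : ∀ z, |u z - v z| * ρ z ≤ M := le_ciSup (bddAbove_abs_sub_mul hρpos hubdd hvbdd)
  have hM0 : 0 ≤ M := (mul_nonneg (abs_nonneg _) (hρpos x)).trans (hM x)
  have hD : |D| ≤ k * M * ∫ y, J y :=
    abs_convW_comp_sub_comp_le hJint hJpos hρcont hρpos hρbdd hf hucont hvcont hubdd hvbdd hM x
  calc _ = |(v x - u x) + D| * ρ x := by congr 2; ring
    _ ≤ |u x - v x| * ρ x + |D| * ρ x := by
        rw [← add_mul, abs_sub_comm (u x)]
        exact mul_le_mul_of_nonneg_right (abs_add_le _ _) (hρpos x)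
    _ ≤ M + k * M * (∫ y, J y) * ⨆ z, ρ z :=
        add_le_add (hM x) (mul_le_mul hD (le_ciSup hρbdd x) (hρpos x)
          (mul_nonneg (mul_nonneg (nonneg_of_abs_sub_le_mul hf) hM0) (integral_nonneg hJpos)))
    _ = _ := by ring

/-- if `f` is globally Lipschitz with constant `k`, then
`F(u) = -u + J *_ρ (f∘u) + h` is globally Lipschitz on `C_ρ(ℝ^N)`:
`‖F(u) - F(v)‖_ρ ≤ (1 + k ‖J‖_{L¹} ‖ρ‖_∞) ‖u - v‖_ρ`. -/
theorem F_globally_lipschitz_Crho {N : ℕ} (hN : 1 ≤ N)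
    (J ρ h : (Fin N → ℝ) → ℝ)
    (hJint : Integrable J) (hJpos : ∀ x, 0 ≤ J x)
    (hρcont : Continuous ρ) (hρpos : ∀ x, 0 ≤ ρ x)
    (hρbdd : BddAbove (Set.range ρ)) (hρint : Integrable ρ)
    (hhcont : Continuous h) (hhbdd : ∃ C, ∀ x, |h x| ≤ C)
    (f : ℝ → ℝ) (k : ℝ) (hf : ∀ a b : ℝ, |f a - f b| ≤ k * |a - b|)
    (u v : (Fin N → ℝ) → ℝ) (hucont : Continuous u) (hvcont : Continuous v)
    (hubdd : BddAbove (Set.range fun x => |u x| * ρ x))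
    (hvbdd : BddAbove (Set.range fun x => |v x| * ρ x)) :
    ∀ x, |(-u x + convW J ρ (fun y => f (u y)) x + h x) -
          (-v x + convW J ρ (fun y => f (v y)) x + h x)| * ρ x ≤
        (1 + k * (∫ y, J y) * (⨆ z, ρ z)) * (⨆ z, |u z - v z| * ρ z) :=
  F_globally_lipschitz_Crho_general J ρ h hJint hJpos hρcont hρpos hρbdd f k hf u v hucont hvcont
    hubdd hvbdd
end

section
/- Suppose f : ℝ → ℝ is continuous, bounded, strictly increasing, with 0 ≤ f(x) ≤ M for all x, and let g : ℝ → ℝ satisfy g(f(x)) = x for all x ∈ ℝ with r ↦ |g(r)| integrable on (0,M), L := ∫₀^M |g(r)| dr. Then for every continuous u : ℝ^N → ℝ with ‖u‖_ρ < ∞, the Lyapunov functional F(u) = ∫_{ℝ^N} [ -½ f(u(x)) (J *_ρ (f∘u))(x) + ∫₀^{f(u(x))} g(r) dr - h(x) f(u(x)) ] ρ(x) dx is well defined (the integrand is integrable) and satisfies |F(u)| ≤ ½ M² ‖J‖_{L¹(ℝ^N)} ‖ρ‖_∞ ‖ρ‖_{L¹(ℝ^N)} + L ‖ρ‖_{L¹(ℝ^N)}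 + M ‖h‖_∞ ‖ρ‖_{L¹(ℝ^N)} < ∞. -/
open MeasureTheory Real

/-- The integrand of the Lyapunov functional. -/
noncomputable def lyapIntegrand {N : ℕ} (J ρ h : (Fin N → ℝ) → ℝ) (f g : ℝ → ℝ)
    (u : (Fin N → ℝ) → ℝ) (x : Fin N → ℝ) : ℝ :=
  (-(1/2) * f (u x) * convW J ρ (fun y => f (u y)) x
    + (∫ r in (0:ℝ)..(f (u x)), g r) - h x * f (u x)) * ρ x

/-- The Lyapunov functional
`F(u) = ∫ [ -½ f(u(x)) (J *_ρ (f∘u))(x) + ∫₀^{f(u(x))} g(r) dr - h(x) f(u(x)) ] ρ(x) dx`,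
where `g` is (an extension of) `f⁻¹`. -/
noncomputable def lyap {N : ℕ} (J ρ h : (Fin N → ℝ) → ℝ) (f g : ℝ → ℝ)
    (u : (Fin N → ℝ) → ℝ) : ℝ :=
  ∫ x, lyapIntegrand J ρ h f g u x

/-!
The integrand is dominated by `C ρ` with `C = ½ M² ‖J‖₁ sup ρ + L + M sup |h|`: since `0 ≤ f ≤ M`,
the weighted convolution is at most `M sup ρ ‖J‖₁`, and `|∫₀^c g| ≤ ∫₀^M |g|` for `c ∈ [0, M]`.
Integrability then reduces to measurability. The delicate term is `x ↦ ∫₀^{f(u x)} g`, as `g`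
itself need not be measurable: the primitive `c ↦ ∫_{(a,c]} g` is continuous on the interval of
those `c > a` for which `g` is integrable on `(a,c]`, and vanishes (as a junk value) elsewhere.
-/

open Set

section
variable {E : Type*} [NormedAddCommGroup E] [NormedSpace ℝ E]

theorem continuousOn_setIntegral_Ioc_setOf_integrableOn (g : ℝ → E) (a : ℝ) :
    ContinuousOn (fun c => ∫ r in Ioc a c, g r) {c | a < c ∧ IntegrableOn g (Ioc a c)} := by
  rintro c ⟨hac, hc⟩
  by_cases hmax : ∃ b, c < b ∧ IntegrableOn g (Ioc a b)
  · obtain ⟨b, hcb, hb⟩ := hmax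
    have hcont := intervalIntegral.continuousOn_primitive
      ((integrableOn_Icc_iff_integrableOn_Ioc (μ := volume)).mpr hb)
    exact (hcont.continuousAt (Icc_mem_nhds hac hcb)).continuousWithinAt
  · push Not at hmax
    refine (intervalIntegral.continuousOn_primitive
      ((integrableOn_Icc_iff_integrableOn_Ioc (μ := volume)).mpr hc) c
      ⟨hac.le, le_rfl⟩).mono ?_
    rintro b ⟨hab, hb⟩
    exact ⟨hab.le, not_lt.mp fun hcb => hmax b hcb hb⟩

theorem measurable_setIntegral_Ioc [MeasurableSpace E] [BorelSpace E] (g : ℝ → E) (a : ℝ) :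
    Measurable fun c => ∫ r in Ioc a c, g r := by
  classical
  set S : Set ℝ := {c | a < c ∧ IntegrableOn g (Ioc a c)}
  have hS : S.OrdConnected := ⟨fun c₁ hc₁ c₂ hc₂ c hc =>
    ⟨hc₁.1.trans_le hc.1, hc₂.2.mono_set (Ioc_subset_Ioc_right hc.2)⟩⟩
  have hpiece : (fun c => ∫ r in Ioc a c, g r) = S.piecewise (fun c => ∫ r in Ioc a c, g r) 0 := by
    ext c
    by_cases hc : c ∈ S
    · simp [hc]
    · simp only [piecewise_eq_of_notMem _ _ _ hc, Pi.zero_apply]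
      by_cases hac : a < c
      · exact integral_undef fun hint => hc ⟨hac, hint⟩
      · simp [Ioc_eq_empty hac]
  rw [hpiece]
  exact (continuousOn_setIntegral_Ioc_setOf_integrableOn g a).measurable_piecewise
    continuousOn_const hS.measurableSet
end

section
variable {N : ℕ} {J ρ v : (Fin N → ℝ) → ℝ}

theorem aestronglyMeasurable_convW (hJ : AEStronglyMeasurable J) (hv : AEStronglyMeasurable v)
    (hρ : AEStronglyMeasurable ρ) : AEStronglyMeasurable (convW J ρ v) := by
  have hprod : AEStronglyMeasurable (fun p : (Fin N → ℝ) × (Fin N → ℝ) =>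
      J (p.1 - p.2) * v p.2 * ρ p.2) (volume.prod volume) :=
    ((hJ.comp_quasiMeasurePreserving (quasiMeasurePreserving_sub volume volume)).mul
      hv.comp_snd).mul hρ.comp_snd
  exact hprod.integral_prod_right'

theorem abs_convW_le (hJ : Integrable J) (hJ0 : ∀ x, 0 ≤ J x) {C : ℝ}
    (hvρ : ∀ y, |v y * ρ y| ≤ C) (x : Fin N → ℝ) : |convW J ρ v x| ≤ C * ∫ y, J y := by
  calc |convW J ρ v x| ≤ ∫ y, J (x - y) * C :=
        norm_integral_le_of_norm_le (f := fun y => J (x - y) * v y * ρ y)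
          ((hJ.comp_sub_left x).mul_const C) <| .of_forall fun y => by
          rw [Real.norm_eq_abs, mul_assoc, abs_mul, abs_of_nonneg (hJ0 _)]
          exact mul_le_mul_of_nonneg_left (hvρ y) (hJ0 _)
    _ = C * ∫ y, J y := by rw [integral_mul_const, integral_sub_left_eq_self, mul_comm]
end

theorem abs_intervalIntegral_le_integral_abs_of_le {g : ℝ → ℝ} {a b c : ℝ} (hac : a ≤ c)
    (hcb : c ≤ b) (hg : IntervalIntegrable (fun r => |g r|) volume a b) :
    |∫ r in a..c, g r| ≤ ∫ r in a..b, |g r| :=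
  (intervalIntegral.abs_integral_le_integral_abs hac).trans <|
    intervalIntegral.integral_mono_interval le_rfl hac hcb (.of_forall fun _ => abs_nonneg _) hg

section
variable {N : ℕ} {J ρ h : (Fin N → ℝ) → ℝ} {f g : ℝ → ℝ} {u : (Fin N → ℝ) → ℝ}

theorem aestronglyMeasurable_lyapIntegrand (hJ : AEStronglyMeasurable J) (hρ : Measurable ρ)
    (hh : Measurable h) (hf : Measurable f) (hu : Measurable u) (hf0 : ∀ r, 0 ≤ f r) :
    AEStronglyMeasurable (lyapIntegrand J ρ h f g u) := by
  have hfu : Measurable fun x => f (u x) := hf.comp hu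
  have hprimitive : Measurable fun x => ∫ r in (0:ℝ)..f (u x), g r := by
    simp only [intervalIntegral.integral_of_le (hf0 _)]
    exact (measurable_setIntegral_Ioc g 0).comp hfu
  have hconv := aestronglyMeasurable_convW hJ hfu.aestronglyMeasurable hρ.aestronglyMeasurable
  unfold lyapIntegrand
  exact (((aestronglyMeasurable_const.mul hfu.aestronglyMeasurable).mul hconv).add
    hprimitive.aestronglyMeasurable |>.sub (hh.mul hfu).aestronglyMeasurable).mul
    hρ.aestronglyMeasurable

theorem abs_lyapIntegrand_le (hJ : Integrable J) (hJ0 : ∀ x, 0 ≤ J x) {R H M : ℝ}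
    (hρ0 : ∀ x, 0 ≤ ρ x) (hρR : ∀ x, ρ x ≤ R) (hhH : ∀ x, |h x| ≤ H)
    (hf0 : ∀ r, 0 ≤ f r) (hfM : ∀ r, f r ≤ M)
    (hg : IntervalIntegrable (fun r => |g r|) volume 0 M) (x : Fin N → ℝ) :
    |lyapIntegrand J ρ h f g u x|
      ≤ ((1/2) * M^2 * (∫ y, J y) * R + (∫ r in (0:ℝ)..M, |g r|) + M * H) * ρ x := by
  have hM0 : 0 ≤ M := (hf0 0).trans (hfM 0)
  have hconv : |convW J ρ (fun y => f (u y)) x| ≤ M * R * ∫ y, J y :=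
    abs_convW_le hJ hJ0 (fun y => by
      rw [abs_mul, abs_of_nonneg (hf0 _), abs_of_nonneg (hρ0 _)]
      exact mul_le_mul (hfM _) (hρR y) (hρ0 y) hM0) x
  have hinteraction : |-(1/2) * f (u x) * convW J ρ (fun y => f (u y)) x|
      ≤ (1/2) * M^2 * (∫ y, J y) * R := by
    rw [abs_mul, abs_mul, abs_neg, abs_of_pos one_half_pos, abs_of_nonneg (hf0 _)]
    calc 1 / 2 * f (u x) * |convW J ρ (fun y => f (u y)) x|
        ≤ 1 / 2 * M * (M * R * ∫ y, J y) := by gcongr; exact hfM _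
      _ = (1/2) * M^2 * (∫ y, J y) * R := by ring
  have hprimitive := abs_intervalIntegral_le_integral_abs_of_le (hf0 (u x)) (hfM (u x)) hg
  have hsource : |h x * f (u x)| ≤ M * H := by
    rw [abs_mul, abs_of_nonneg (hf0 _), mul_comm M]
    exact mul_le_mul (hhH x) (hfM _) (hf0 _) ((abs_nonneg _).trans (hhH x))
  rw [lyapIntegrand, abs_mul, abs_of_nonneg (hρ0 x)]
  refine mul_le_mul_of_nonneg_right ?_ (hρ0 x)
  calc _ ≤ |-(1/2) * f (u x) * convW J ρ (fun y => f (u y)) x|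
        + |∫ r in (0:ℝ)..(f (u x)), g r| + |h x * f (u x)| :=
        (abs_sub _ _).trans (add_le_add_left (abs_add_le _ _) _)
    _ ≤ _ := by gcongr
end

theorem lyapunov_functional_well_defined_general {N : ℕ}
    (J ρ h : (Fin N → ℝ) → ℝ)
    (hJint : Integrable J) (hJpos : ∀ x, 0 ≤ J x)
    (hρcont : Continuous ρ) (hρpos : ∀ x, 0 ≤ ρ x)
    (hρbdd : BddAbove (Set.range ρ)) (hρint : Integrable ρ)
    (hhcont : Continuous h) (hhbdd : BddAbove (Set.range fun x => |h x|))
    (f g : ℝ → ℝ) (hfc : Continuous f)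
    (M : ℝ) (hf0 : ∀ x : ℝ, 0 ≤ f x) (hfM : ∀ x : ℝ, f x ≤ M)
    (hgint : IntervalIntegrable (fun r => |g r|) volume 0 M)
    (L : ℝ) (hL : L = ∫ r in (0:ℝ)..M, |g r|)
    (u : (Fin N → ℝ) → ℝ) (hucont : Continuous u) :
    Integrable (lyapIntegrand J ρ h f g u) ∧
      |lyap J ρ h f g u| ≤
        (1/2) * M^2 * (∫ y, J y) * (⨆ z, ρ z) * (∫ z, ρ z)
          + L * (∫ z, ρ z) + M * (⨆ z, |h z|) * (∫ z, ρ z) := by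
  have hbound := abs_lyapIntegrand_le (u := u) hJint hJpos hρpos (le_ciSup hρbdd)
    (le_ciSup hhbdd) hf0 hfM hgint
  have hmeas := aestronglyMeasurable_lyapIntegrand (g := g) hJint.aestronglyMeasurable
    hρcont.measurable hhcont.measurable hfc.measurable hucont.measurable hf0
  refine ⟨(hρint.const_mul _).mono' hmeas (.of_forall hbound), ?_⟩
  calc |lyap J ρ h f g u| ≤ ∫ x, ((1/2) * M^2 * (∫ y, J y) * (⨆ z, ρ z)
        + (∫ r in (0:ℝ)..M, |g r|) + M * (⨆ z, |h z|)) * ρ x :=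
        norm_integral_le_of_norm_le (f := lyapIntegrand J ρ h f g u) (hρint.const_mul _)
          (.of_forall hbound)
    _ = _ := by rw [integral_const_mul, hL]; ring

/-- the Lyapunov functional is well defined on `C_ρ(ℝ^N)` and satisfies
`|F(u)| ≤ ½ M² ‖J‖_{L¹} ‖ρ‖_∞ ‖ρ‖_{L¹} + L ‖ρ‖_{L¹} + M ‖h‖_∞ ‖ρ‖_{L¹}`. -/
theorem lyapunov_functional_well_defined {N : ℕ} (hN : 1 ≤ N)
    (J ρ h : (Fin N → ℝ) → ℝ)
    (hJint : Integrable J) (hJpos : ∀ x, 0 ≤ J x)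
    (hρcont : Continuous ρ) (hρpos : ∀ x, 0 ≤ ρ x)
    (hρbdd : BddAbove (Set.range ρ)) (hρint : Integrable ρ)
    (hhcont : Continuous h) (hhbdd : BddAbove (Set.range fun x => |h x|))
    (f g : ℝ → ℝ) (hfc : Continuous f) (hfmono : StrictMono f)
    (M : ℝ) (hf0 : ∀ x : ℝ, 0 ≤ f x) (hfM : ∀ x : ℝ, f x ≤ M)
    (hg : ∀ x : ℝ, g (f x) = x)
    (hgint : IntervalIntegrable (fun r => |g r|) volume 0 M)
    (L : ℝ) (hL : L = ∫ r in (0:ℝ)..M, |g r|)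
    (u : (Fin N → ℝ) → ℝ) (hucont : Continuous u)
    (hubdd : BddAbove (Set.range fun x => |u x| * ρ x)) :
    Integrable (lyapIntegrand J ρ h f g u) ∧
      |lyap J ρ h f g u| ≤
        (1/2) * M^2 * (∫ y, J y) * (⨆ z, ρ z) * (∫ z, ρ z)
          + L * (∫ z, ρ z) + M * (⨆ z, |h z|) * (∫ z, ρ z) :=
  lyapunov_functional_well_defined_general J ρ h hJint hJpos hρcont hρpos hρbdd hρint hhcont hhbdd f
    g hfc M hf0 hfM hgint L hL u hucont
end
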